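/- Let h, a : ℝ → ℝ³ with a differentiable and a′(t) = h(t) ⋉ a(t) for all t, where ⋉ is the su(1,1) bracket. Set z(t) := √(a₁(t)² + a₂(t)²) and assume z(t) ≠ 0 and z(t)² − a₃(t)² > 0 for all t; set μ(t) := √(z(t)² − a₃(t)²). Let τ : ℝ → ℝ be differentiable with τ′(t) = −(a₁h₁ + a₂h₂)/z² for all t. Then for any constants A, B, C ∈ ℝ, the function x(t) := A·a(t) + (μ(t)B/z(t))·cosh(μ(t)τ(t)+C)·(a₂, −a₁, 0) + (B/z(t))·sinh(μ(t)τ(t)+C)·(a₃a₁, a₃a₂, z²) is differentiable and satisfies x′(t) = h(t) ⋉ x(t) for all t. -/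

import Mathlib

/-!
The Minkowski square `a₁² + a₂² − a₃²` is invariant under `ȧ = h ⋉ a`, so `μ` is a constant.
Along `a` the vectors `u := (a₂, −a₁, 0)/z` and `v := (a₃a₁, a₃a₂, z²)/z` move like solutions up to
a hyperbolic rotation in their own plane: `u̇ = h ⋉ u − τ̇ v` and `v̇ = h ⋉ v − μ² τ̇ u`. For such a pair the
hyperbolic combination `μ cosh(μτ + C) u + sinh(μτ + C) v` solves `ẋ = h ⋉ x` exactly, and solutions
form a vector space.
-/

/-- The su(1,1) bracket on `ℝ³`:
`a ⋉ b := (a₃b₂ − a₂b₃, a₁b₃ − a₃b₁, a₁b₂ − a₂b₁)`. -/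
def su11Bracket (a b : Fin 3 → ℝ) : Fin 3 → ℝ :=
  ![a 2 * b 1 - a 1 * b 2, a 0 * b 2 - a 2 * b 0, a 0 * b 1 - a 1 * b 0]

open Real

lemma su11Bracket_add_right (h u v : Fin 3 → ℝ) :
    su11Bracket h (u + v) = su11Bracket h u + su11Bracket h v := by
  ext i; fin_cases i <;> simp [su11Bracket] <;> ring

lemma su11Bracket_smul_right (h u : Fin 3 → ℝ) (c : ℝ) :
    su11Bracket h (c • u) = c • su11Bracket h u := by
  ext i; fin_cases i <;> simp [su11Bracket] <;> ring

def su11Ad (h : Fin 3 → ℝ) : (Fin 3 → ℝ) →ₗ[ℝ] (Fin 3 → ℝ) where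
  toFun := su11Bracket h
  map_add' := su11Bracket_add_right h
  map_smul' c u := su11Bracket_smul_right h u c

lemma hasDerivAt_vecCons₃ {f g k : ℝ → ℝ} {f' g' k' t : ℝ} (hf : HasDerivAt f f' t)
    (hg : HasDerivAt g g' t) (hk : HasDerivAt k k' t) :
    HasDerivAt (fun s => ![f s, g s, k s]) ![f', g', k'] t :=
  hasDerivAt_pi.2 fun i => by fin_cases i <;> simpa

lemma HasDerivAt.inv_sqrt_smul {F : Type*} [NormedAddCommGroup F] [NormedSpace ℝ F]
    {r : ℝ → ℝ} {e : ℝ → F} {r' t : ℝ} {e' : F} (hr : HasDerivAt r r' t)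
    (he : HasDerivAt e e' t) (hpos : 0 < r t) :
    HasDerivAt (fun s => (√(r s))⁻¹ • e s) ((√(r t))⁻¹ • (e' - (r' / (2 * r t)) • e t)) t := by
  have hz : √(r t) ≠ 0 := (sqrt_pos.2 hpos).ne'
  refine (((hr.sqrt hpos.ne').inv hz).smul he).congr_deriv ?_
  rw [smul_sub, smul_smul, sub_eq_add_neg, ← neg_smul]
  congr 2
  rw [sq_sqrt hpos.le]
  field_simp

lemma hasDerivAt_cosh_smul_add_sinh_smul {E : Type*} [NormedAddCommGroup E] [NormedSpace ℝ E]
    {L : E →ₗ[ℝ] E} {u v : ℝ → E} {τ : ℝ → ℝ} {w μ C t : ℝ}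
    (hu : HasDerivAt u (L (u t) + w • v t) t)
    (hv : HasDerivAt v (L (v t) + (μ ^ 2 * w) • u t) t)
    (hτ : HasDerivAt τ (-w) t) :
    HasDerivAt (fun s => (μ * cosh (μ * τ s + C)) • u s + sinh (μ * τ s + C) • v s)
      (L ((μ * cosh (μ * τ t + C)) • u t + sinh (μ * τ t + C) • v t)) t := by
  have hφ := (hτ.const_mul μ).add_const C
  refine (((hφ.cosh.const_mul μ).smul hu).add (hφ.sinh.smul hv)).congr_deriv ?_
  rw [map_add, map_smul, map_smul]
  module

noncomputable def frameU (v : Fin 3 → ℝ) : Fin 3 → ℝ :=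
  (√(v 0 ^ 2 + v 1 ^ 2))⁻¹ • ![v 1, -v 0, 0]

noncomputable def frameV (v : Fin 3 → ℝ) : Fin 3 → ℝ :=
  (√(v 0 ^ 2 + v 1 ^ 2))⁻¹ • ![v 2 * v 0, v 2 * v 1, v 0 ^ 2 + v 1 ^ 2]

section Frame

variable {a : ℝ → Fin 3 → ℝ} {h : Fin 3 → ℝ} {t : ℝ}

lemma hasDerivAt_sq_add_sq (ha : HasDerivAt a (su11Bracket h (a t)) t) :
    HasDerivAt (fun s => a s 0 ^ 2 + a s 1 ^ 2)
      (2 * a t 2 * (a t 1 * h 0 - a t 0 * h 1)) t := by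
  refine (((hasDerivAt_pi.1 ha 0).pow 2).add ((hasDerivAt_pi.1 ha 1).pow 2)).congr_deriv ?_
  simp [su11Bracket]
  ring

lemma hasDerivAt_minkowskiSq (ha : HasDerivAt a (su11Bracket h (a t)) t) :
    HasDerivAt (fun s => a s 0 ^ 2 + a s 1 ^ 2 - a s 2 ^ 2) 0 t := by
  refine ((hasDerivAt_sq_add_sq ha).sub ((hasDerivAt_pi.1 ha 2).pow 2)).congr_deriv ?_
  simp [su11Bracket]
  ring

lemma hasDerivAt_frameU (ha : HasDerivAt a (su11Bracket h (a t)) t)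
    (hr : 0 < a t 0 ^ 2 + a t 1 ^ 2) :
    HasDerivAt (fun s => frameU (a s)) (su11Bracket h (frameU (a t)) +
      ((a t 0 * h 0 + a t 1 * h 1) / (a t 0 ^ 2 + a t 1 ^ 2)) • frameV (a t)) t := by
  have he := hasDerivAt_vecCons₃ (hasDerivAt_pi.1 ha 1) (hasDerivAt_pi.1 ha 0).neg
    (hasDerivAt_const t (0 : ℝ))
  refine ((hasDerivAt_sq_add_sq ha).inv_sqrt_smul he hr).congr_deriv ?_
  rw [frameU, frameV, su11Bracket_smul_right, smul_comm _ (√_)⁻¹, ← smul_add]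
  congr 1
  ext i; fin_cases i <;> simp [su11Bracket] <;> field_simp <;> ring

lemma hasDerivAt_frameV (ha : HasDerivAt a (su11Bracket h (a t)) t)
    (hr : 0 < a t 0 ^ 2 + a t 1 ^ 2) :
    HasDerivAt (fun s => frameV (a s)) (su11Bracket h (frameV (a t)) +
      ((a t 0 ^ 2 + a t 1 ^ 2 - a t 2 ^ 2) *
        ((a t 0 * h 0 + a t 1 * h 1) / (a t 0 ^ 2 + a t 1 ^ 2))) • frameU (a t)) t := by
  have h0 := hasDerivAt_pi.1 ha 0
  have h1 := hasDerivAt_pi.1 ha 1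
  have h2 := hasDerivAt_pi.1 ha 2
  have he := hasDerivAt_vecCons₃ (h2.mul h0) (h2.mul h1) (hasDerivAt_sq_add_sq ha)
  refine ((hasDerivAt_sq_add_sq ha).inv_sqrt_smul he hr).congr_deriv ?_
  rw [frameU, frameV, su11Bracket_smul_right, smul_comm _ (√_)⁻¹, ← smul_add]
  congr 1
  ext i; fin_cases i <;> simp [su11Bracket] <;> field_simp <;> ring

end Frame

lemma minkowskiSq_eq_of_hasDerivAt {h a : ℝ → Fin 3 → ℝ}
    (ha : ∀ t, HasDerivAt a (su11Bracket (h t) (a t)) t) (t s : ℝ) :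
    a t 0 ^ 2 + a t 1 ^ 2 - a t 2 ^ 2 = a s 0 ^ 2 + a s 1 ^ 2 - a s 2 ^ 2 :=
  is_const_of_deriv_eq_zero (fun t => (hasDerivAt_minkowskiSq (ha t)).differentiableAt)
    (fun t => (hasDerivAt_minkowskiSq (ha t)).deriv) t s

theorem stmt_13 (h a : ℝ → Fin 3 → ℝ) (τ : ℝ → ℝ) (A B C : ℝ)
    (ha : ∀ t : ℝ, HasDerivAt a (su11Bracket (h t) (a t)) t)
    (hz : ∀ t : ℝ, Real.sqrt (a t 0 ^ 2 + a t 1 ^ 2) ≠ 0)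
    (hμ : ∀ t : ℝ, Real.sqrt (a t 0 ^ 2 + a t 1 ^ 2) ^ 2 - a t 2 ^ 2 > 0)
    (hτ : ∀ t : ℝ, HasDerivAt τ
      (-((a t 0 * h t 0 + a t 1 * h t 1) / (a t 0 ^ 2 + a t 1 ^ 2))) t)
    (x : ℝ → Fin 3 → ℝ)
    (hx : ∀ t : ℝ, x t =
      A • a t
      + ((Real.sqrt (Real.sqrt (a t 0 ^ 2 + a t 1 ^ 2) ^ 2 - a t 2 ^ 2) * B /
            Real.sqrt (a t 0 ^ 2 + a t 1 ^ 2)) *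
          Real.cosh (Real.sqrt (Real.sqrt (a t 0 ^ 2 + a t 1 ^ 2) ^ 2 - a t 2 ^ 2)
            * τ t + C)) • ![a t 1, -(a t 0), 0]
      + ((B / Real.sqrt (a t 0 ^ 2 + a t 1 ^ 2)) *
          Real.sinh (Real.sqrt (Real.sqrt (a t 0 ^ 2 + a t 1 ^ 2) ^ 2 - a t 2 ^ 2)
            * τ t + C)) • ![a t 2 * a t 0, a t 2 * a t 1, a t 0 ^ 2 + a t 1 ^ 2]) :
    ∀ t : ℝ, HasDerivAt x (su11Bracket (h t) (x t)) t := by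
  have hr (t : ℝ) : 0 < a t 0 ^ 2 + a t 1 ^ 2 := sqrt_ne_zero'.1 (hz t)
  set μ := √(a 0 0 ^ 2 + a 0 1 ^ 2 - a 0 2 ^ 2)
  have hμ_eq (t : ℝ) : √(√(a t 0 ^ 2 + a t 1 ^ 2) ^ 2 - a t 2 ^ 2) = μ := by
    rw [sq_sqrt (hr t).le, minkowskiSq_eq_of_hasDerivAt ha t 0]
  have hμ_sq (t : ℝ) : μ ^ 2 = a t 0 ^ 2 + a t 1 ^ 2 - a t 2 ^ 2 := by
    rw [← hμ_eq t, sq_sqrt (hμ t).le, sq_sqrt (hr t).le]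
  have hx_frame : x = fun t => A • a t + B • ((μ * cosh (μ * τ t + C)) • frameU (a t)
      + sinh (μ * τ t + C) • frameV (a t)) := by
    funext t
    rw [hx t, hμ_eq t]
    ext i; fin_cases i <;> simp [frameU, frameV, Matrix.vecHead, Matrix.vecTail] <;> ring
  intro t
  have hv := hasDerivAt_frameV (ha t) (hr t)
  rw [← hμ_sq t] at hv
  have hw := hasDerivAt_cosh_smul_add_sinh_smul (L := su11Ad (h t)) (C := C)
    (u := fun s => frameU (a s)) (v := fun s => frameV (a s))
    (hasDerivAt_frameU (ha t) (hr t)) hv (hτ t)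
  rw [hx_frame]
  refine (((ha t).const_smul A).add (hw.const_smul B)).congr_deriv ?_
  simp only [su11Ad, LinearMap.coe_mk, AddHom.coe_mk, su11Bracket_add_right,
    su11Bracket_smul_right]
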